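/- Energy reduction by rows: let σ be a hard-core configuration on the 2K×3L triangular grid Λ such that σ(v) = 0 for every vertex v ∈ S_0 ∩ (Λ_a ∪ Λ_c) (the first horizontal stripe contains no gray and no white particles). Then there exists a path ω from σ to b in X with height Φ_ω ≤ H(σ) + 1. -/
import Mathlib


open Finset

variable (K L : ℕ) [NeZero K] [NeZero L]

/-- Vertices of the `2K × 3L` triangular grid: pairs `(i,j) ∈ (ℤ/2K) × (ℤ/6L)` with `i+j` even. -/
abbrev Vert (K L : ℕ) [NeZero K] [NeZero L] : Type :=
  {p : ZMod (2 * K) × ZMod (6 * L) // (p.1.val + p.2.val) % 2 = 0}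

/-- Adjacency in the triangular grid with periodic boundary conditions. -/
abbrev Adj (v w : Vert K L) : Prop :=
  (w.1.1 = v.1.1 ∧ (w.1.2 = v.1.2 + 2 ∨ w.1.2 = v.1.2 - 2)) ∨
  ((w.1.1 = v.1.1 + 1 ∨ w.1.1 = v.1.1 - 1) ∧ (w.1.2 = v.1.2 + 1 ∨ w.1.2 = v.1.2 - 1))

/-- A particle configuration on the grid. -/
abbrev Cfg (K L : ℕ) [NeZero K] [NeZero L] : Type := Vert K L → Bool

/-- Hard-core condition: no two adjacent occupied sites. -/
abbrev HardCore (σ : Cfg K L) : Prop :=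
  ∀ v w : Vert K L, Adj K L v w → ¬(σ v = true ∧ σ w = true)

/-- Number of particles of a configuration. -/
def nParticles (σ : Cfg K L) : ℕ := (univ.filter fun v => σ v = true).card

/-- The energy (Hamiltonian) `H(σ) = -Σ_v σ(v)`. -/
def energy (σ : Cfg K L) : ℤ := -(nParticles K L σ : ℤ)

/-- The configuration `a`: indicator of `Λ_a` (columns `j ≡ 0 (mod 3)`). -/
def confA : Cfg K L := fun v => decide (v.1.2.val % 3 = 0)

/-- The configuration `b`: indicator of `Λ_b` (columns `j ≡ 1 (mod 3)`). -/
def confB : Cfg K L := fun v => decide (v.1.2.val % 3 = 1)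

/-- The configuration `c`: indicator of `Λ_c` (columns `j ≡ 2 (mod 3)`). -/
def confC : Cfg K L := fun v => decide (v.1.2.val % 3 = 2)

/-- A path in the energy landscape: a finite sequence of hard-core configurations,
consecutive ones differing in at most one vertex. -/
structure HCPath (σ σ' : Cfg K L) where
  n : ℕ
  ω : Fin (n + 1) → Cfg K L
  first : ω 0 = σ
  last : ω (Fin.last n) = σ'
  hc : ∀ i, HardCore K L (ω i)
  step : ∀ i : Fin n,
    ((univ : Finset (Vert K L)).filter fun v => ω i.castSucc v ≠ ω i.succ v).card ≤ 1

/-- Height of a path: maximal energy along it. -/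
noncomputable def pathHeight {σ σ' : Cfg K L} (p : HCPath K L σ σ') : ℤ :=
  Finset.univ.sup' Finset.univ_nonempty fun i => energy K L (p.ω i)

/-- Communication height `Φ(σ,σ')`: minimal height over all paths from `σ` to `σ'`. -/
noncomputable def commHeight (σ σ' : Cfg K L) : ℤ :=
  sInf {h : ℤ | ∃ p : HCPath K L σ σ', pathHeight K L p = h}

/-- The horizontal stripe `S_i = r_{2i} ∪ r_{2i+1}`. -/
abbrev inHStripe (i : ℕ) (v : Vert K L) : Prop :=
  v.1.1 = ((2 * i : ℕ) : ZMod (2 * K)) ∨ v.1.1 = ((2 * i + 1 : ℕ) : ZMod (2 * K))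

/-- The vertical stripe `C_j = c_j ∪ c_{j+1} ∪ c_{j+2}` (column indices mod `6L`). -/
abbrev inVStripe (j : ℕ) (v : Vert K L) : Prop :=
  v.1.2 = ((j : ℕ) : ZMod (6 * L)) ∨ v.1.2 = ((j + 1 : ℕ) : ZMod (6 * L)) ∨
    v.1.2 = ((j + 2 : ℕ) : ZMod (6 * L))

/-- Two configurations agree on a region. -/
def agreesOn (P : Vert K L → Prop) (σ τ : Cfg K L) : Prop := ∀ v, P v → σ v = τ v

set_option linter.unusedSectionVars false
section Aux12

lemma zval_mod_add {n d : ℕ} [NeZero n] (hd : d ∣ n) (x y : ZMod n) :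
    (x + y).val % d = (x.val + y.val) % d := by
  rw [ZMod.val_add, Nat.mod_mod_of_dvd _ hd]

lemma val1_2K : (1 : ZMod (2*K)).val = 1 := by
  haveI : Fact (1 < 2*K) := ⟨by have := Nat.pos_of_ne_zero (NeZero.ne K); omega⟩
  exact ZMod.val_one _

lemma val1_6L : (1 : ZMod (6*L)).val = 1 := by
  haveI : Fact (1 < 6*L) := ⟨by have := Nat.pos_of_ne_zero (NeZero.ne L); omega⟩
  exact ZMod.val_one _

lemma val2_6L : (2 : ZMod (6*L)).val = 2 := by
  have h : ((2:ℕ) : ZMod (6*L)).val = 2 :=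
    ZMod.val_cast_of_lt (by have := Nat.pos_of_ne_zero (NeZero.ne L); omega)
  simpa using h

lemma one_ne_zero_2K : (1 : ZMod (2*K)) ≠ 0 := by
  intro h
  have := congrArg ZMod.val h
  rw [val1_2K, ZMod.val_zero] at this
  exact one_ne_zero this

lemma two_ne_zero_2K (hK : 2 ≤ K) : (2 : ZMod (2*K)) ≠ 0 := by
  intro h
  have h2 : ((2:ℕ) : ZMod (2*K)).val = 2 := ZMod.val_cast_of_lt (by omega)
  have h2' : ((2:ℕ) : ZMod (2*K)) = (2 : ZMod (2*K)) := by push_cast; rfl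
  rw [h2', h] at h2
  rw [ZMod.val_zero] at h2
  omega

lemma two_ne_zero_6L : (2 : ZMod (6*L)) ≠ 0 := by
  intro h
  have := congrArg ZMod.val h
  rw [val2_6L, ZMod.val_zero] at this
  omega

lemma not_adj_self (v : Vert K L) : ¬ Adj K L v v := by
  rintro (⟨-, h2 | h2⟩ | ⟨h1 | h1, -⟩)
  · exact two_ne_zero_6L L (left_eq_add.mp h2)
  · exact two_ne_zero_6L L (add_eq_left.mp (eq_sub_iff_add_eq.mp h2))
  · exact one_ne_zero_2K K (left_eq_add.mp h1)
  · exact one_ne_zero_2K K (add_eq_left.mp (eq_sub_iff_add_eq.mp h1))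

lemma adj_symm {u w : Vert K L} (h : Adj K L u w) : Adj K L w u := by
  obtain ⟨h1, h2 | h2⟩ | ⟨h1 | h1, h2 | h2⟩ := h
  · exact Or.inl ⟨h1.symm, Or.inr (by rw [h2]; ring)⟩
  · exact Or.inl ⟨h1.symm, Or.inl (by rw [h2]; ring)⟩
  · exact Or.inr ⟨Or.inr (by rw [h1]; ring), Or.inr (by rw [h2]; ring)⟩
  · exact Or.inr ⟨Or.inr (by rw [h1]; ring), Or.inl (by rw [h2]; ring)⟩
  · exact Or.inr ⟨Or.inl (by rw [h1]; ring), Or.inr (by rw [h2]; ring)⟩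
  · exact Or.inr ⟨Or.inl (by rw [h1]; ring), Or.inl (by rw [h2]; ring)⟩

lemma adj_cases {u w : Vert K L} (h : Adj K L u w) :
    (w.1.1 = u.1.1 ∧ (w.1.2 = u.1.2 + 2 ∨ u.1.2 = w.1.2 + 2)) ∨
    ((w.1.1 = u.1.1 + 1 ∨ u.1.1 = w.1.1 + 1) ∧ (w.1.2 = u.1.2 + 1 ∨ u.1.2 = w.1.2 + 1)) := by
  obtain ⟨h1, h2 | h2⟩ | ⟨h1 | h1, h2 | h2⟩ := h
  · exact Or.inl ⟨h1, Or.inl h2⟩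
  · exact Or.inl ⟨h1, Or.inr (by rw [h2]; ring)⟩
  · exact Or.inr ⟨Or.inl h1, Or.inl h2⟩
  · exact Or.inr ⟨Or.inl h1, Or.inr (by rw [h2]; ring)⟩
  · exact Or.inr ⟨Or.inr (by rw [h1]; ring), Or.inl h2⟩
  · exact Or.inr ⟨Or.inr (by rw [h1]; ring), Or.inr (by rw [h2]; ring)⟩

lemma adj_b_nonb {u w : Vert K L} (h : Adj K L u w) (hu : u.1.2.val % 3 = 1) :
    w.1.2.val % 3 ≠ 1 := by
  have h3 : (3:ℕ) ∣ 6*L := ⟨2*L, by ring⟩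
  obtain ⟨-, h2 | h2⟩ | ⟨-, h2 | h2⟩ := adj_cases K L h
  · have h' := zval_mod_add h3 u.1.2 2
    rw [← h2, val2_6L] at h'
    omega
  · have h' := zval_mod_add h3 w.1.2 2
    rw [← h2, val2_6L] at h'
    omega
  · have h' := zval_mod_add h3 u.1.2 1
    rw [← h2, val1_6L] at h'
    omega
  · have h' := zval_mod_add h3 w.1.2 1
    rw [← h2, val1_6L] at h'
    omega

lemma upper_nbrs_adj (hK : 2 ≤ K) {u w w' : Vert K L} (h : Adj K L u w) (h' : Adj K L u w')
    (hw : w.1.1 = u.1.1 + 1) (hw' : w'.1.1 = u.1.1 + 1) (hne : w ≠ w') : Adj K L w w' := by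
  have hcol : w.1.2 = u.1.2 + 1 ∨ u.1.2 = w.1.2 + 1 := by
    obtain ⟨h1, -⟩ | ⟨-, h2⟩ := adj_cases K L h
    · exact absurd (add_eq_left.mp (hw.symm.trans h1)) (one_ne_zero_2K K)
    · exact h2
  have hcol' : w'.1.2 = u.1.2 + 1 ∨ u.1.2 = w'.1.2 + 1 := by
    obtain ⟨h1, -⟩ | ⟨-, h2⟩ := adj_cases K L h'
    · exact absurd (add_eq_left.mp (hw'.symm.trans h1)) (one_ne_zero_2K K)
    · exact h2
  have hrow : w'.1.1 = w.1.1 := hw'.trans hw.symm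
  obtain h2 | h2 := hcol <;> obtain h2' | h2' := hcol'
  · exact absurd (Subtype.ext (Prod.ext (hw.trans hw'.symm) (h2.trans h2'.symm))) hne
  · refine Or.inl ⟨hrow, Or.inr ?_⟩
    have : w.1.2 = w'.1.2 + 2 := by rw [h2, h2']; ring
    rw [this]; ring
  · refine Or.inl ⟨hrow, Or.inl ?_⟩
    rw [h2', h2]; ring
  · refine absurd (Subtype.ext (Prod.ext (hw.trans hw'.symm) ?_)) hne
    exact add_right_cancel (h2.symm.trans h2')

lemma nonb_has_b_nbr {v : Vert K L} (hv : v.1.2.val % 3 ≠ 1) :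
    ∃ u : Vert K L, u.1.2.val % 3 = 1 ∧ u.1.1 = v.1.1 - 1 ∧ Adj K L v u := by
  obtain ⟨⟨r, c⟩, hpar⟩ := v
  simp only at hv hpar ⊢
  have h2K : (2:ℕ) ∣ 2*K := ⟨K, rfl⟩
  have h2L : (2:ℕ) ∣ 6*L := ⟨3*L, by ring⟩
  have h3L : (3:ℕ) ∣ 6*L := ⟨2*L, by ring⟩
  have hr : r.val % 2 = ((r - 1).val + 1) % 2 := by
    have h' := zval_mod_add h2K (r-1) 1
    rw [sub_add_cancel, val1_2K] at h'
    exact h'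
  by_cases hc : c.val % 3 = 0
  · have hcv : (c+1).val % 3 = 1 := by
      have h' := zval_mod_add h3L c 1
      rw [val1_6L] at h'
      omega
    have hpar2 : (c+1).val % 2 = (c.val + 1) % 2 := by
      have h' := zval_mod_add h2L c 1
      rw [val1_6L] at h'
      exact h'
    exact ⟨⟨(r - 1, c + 1), by simp only; omega⟩, hcv, rfl, Or.inr ⟨Or.inr rfl, Or.inl rfl⟩⟩
  · have hcc : c.val % 3 = 2 := by
      have := c.val_lt
      omega
    have hcv : (c-1).val % 3 = 1 := by
      have h' := zval_mod_add h3L (c-1) 1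
      rw [sub_add_cancel, val1_6L] at h'
      omega
    have hpar2 : c.val % 2 = ((c-1).val + 1) % 2 := by
      have h' := zval_mod_add h2L (c-1) 1
      rw [sub_add_cancel, val1_6L] at h'
      exact h'
    exact ⟨⟨(r - 1, c - 1), by simp only; omega⟩, hcv, rfl, Or.inr ⟨Or.inr rfl, Or.inr rfl⟩⟩

end Aux12

section Aux12b

lemma update_diff_le (τ : Cfg K L) (u : Vert K L) (x : Bool) :
    ((univ : Finset (Vert K L)).filter fun v => τ v ≠ Function.update τ u x v).card ≤ 1 := by
  have hsub : ((univ : Finset (Vert K L)).filter fun v => τ v ≠ Function.update τ u x v) ⊆ {u} := by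
    intro v hv
    simp only [mem_filter, mem_univ, true_and] at hv
    rw [Finset.mem_singleton]
    by_contra hne
    exact hv (Function.update_of_ne hne x τ).symm
  simpa using Finset.card_le_card hsub

lemma energy_update_true (τ : Cfg K L) (u : Vert K L) (hu : τ u = false) :
    energy K L (Function.update τ u true) = energy K L τ - 1 := by
  have hset : ((univ : Finset (Vert K L)).filter fun v => Function.update τ u true v = true)
      = insert u ((univ : Finset (Vert K L)).filter fun v => τ v = true) := by
    ext v
    by_cases hv : v = u
    · subst hv; simp [Function.update_self]
    · simp [Function.update_of_ne hv, hv]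
  have hnm : u ∉ (univ : Finset (Vert K L)).filter fun v => τ v = true := by simp [hu]
  have : nParticles K L (Function.update τ u true) = nParticles K L τ + 1 := by
    rw [nParticles, hset, Finset.card_insert_of_notMem hnm, nParticles]
  rw [energy, energy, this]
  push_cast
  ring

lemma energy_update_false (τ : Cfg K L) (u : Vert K L) (hu : τ u = true) :
    energy K L (Function.update τ u false) = energy K L τ + 1 := by
  have hset : ((univ : Finset (Vert K L)).filter fun v => Function.update τ u false v = true)
      = ((univ : Finset (Vert K L)).filter fun v => τ v = true).erase u := by
    ext v
    by_cases hv : v = u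
    · subst hv; simp [Function.update_self]
    · simp [Function.update_of_ne hv, hv]
  have hm : u ∈ (univ : Finset (Vert K L)).filter fun v => τ v = true := by simp [hu]
  have h1 : nParticles K L (Function.update τ u false) + 1 = nParticles K L τ := by
    rw [nParticles, hset, nParticles]
    exact Finset.card_erase_add_one hm
  rw [energy, energy, ← h1]
  push_cast
  ring

lemma hardCore_update_false {τ : Cfg K L} (h : HardCore K L τ) (u : Vert K L) :
    HardCore K L (Function.update τ u false) := by
  intro v w hadj hvw
  apply h v w hadj
  constructor
  · have hv := hvw.1
    by_cases hvu : v = u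
    · subst hvu; rw [Function.update_self] at hv; exact absurd hv (by simp)
    · rwa [Function.update_of_ne hvu] at hv
  · have hw := hvw.2
    by_cases hwu : w = u
    · subst hwu; rw [Function.update_self] at hw; exact absurd hw (by simp)
    · rwa [Function.update_of_ne hwu] at hw

lemma hardCore_update_true {τ : Cfg K L} (h : HardCore K L τ) (u : Vert K L)
    (hnb : ∀ w, Adj K L u w → τ w = false) :
    HardCore K L (Function.update τ u true) := by
  intro v w hadj hvw
  by_cases hvu : v = u
  · subst hvu
    by_cases hwu : w = v
    · subst hwu; exact not_adj_self K L _ hadj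
    · have hw := hvw.2
      rw [Function.update_of_ne hwu] at hw
      rw [hnb w hadj] at hw
      exact absurd hw (by simp)
  · have hv := hvw.1
    rw [Function.update_of_ne hvu] at hv
    by_cases hwu : w = u
    · subst hwu
      rw [hnb v (adj_symm K L hadj)] at hv
      exact absurd hv (by simp)
    · have hw := hvw.2
      rw [Function.update_of_ne hwu] at hw
      exact h v w hadj ⟨hv, hw⟩

end Aux12b

inductive Chain (K L : ℕ) [NeZero K] [NeZero L] : Cfg K L → Cfg K L → Type where
  | nil : ∀ (τ : Cfg K L), HardCore K L τ → Chain K L τ τ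
  | cons : ∀ (τ₁ : Cfg K L) {τ₂ τ₃ : Cfg K L}, HardCore K L τ₁ →
      (((univ : Finset (Vert K L)).filter fun v => τ₁ v ≠ τ₂ v).card ≤ 1) →
      Chain K L τ₂ τ₃ → Chain K L τ₁ τ₃

def Chain.height {K' L' : ℕ} [NeZero K'] [NeZero L'] :
    ∀ {τ τ' : Cfg K' L'}, Chain K' L' τ τ' → ℤ
  | _, _, .nil τ _ => energy K' L' τ
  | _, _, .cons τ₁ _ _ tl => max (energy K' L' τ₁) tl.height

def Chain.append {K' L' : ℕ} [NeZero K'] [NeZero L'] :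
    ∀ {τ₁ τ₂ τ₃ : Cfg K' L'}, Chain K' L' τ₁ τ₂ → Chain K' L' τ₂ τ₃ → Chain K' L' τ₁ τ₃
  | _, _, _, .nil _ _, q => q
  | _, _, _, .cons τ h hs tl, q => .cons τ h hs (tl.append q)

lemma Chain.height_nil {K' L' : ℕ} [NeZero K'] [NeZero L'] (τ : Cfg K' L') (h : HardCore K' L' τ) :
    (Chain.nil τ h).height = energy K' L' τ := rfl

lemma Chain.height_cons {K' L' : ℕ} [NeZero K'] [NeZero L'] (τ₁ : Cfg K' L') {τ₂ τ₃ : Cfg K' L'}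
    (h : HardCore K' L' τ₁) (hs : (((univ : Finset (Vert K' L')).filter fun v => τ₁ v ≠ τ₂ v)).card ≤ 1)
    (tl : Chain K' L' τ₂ τ₃) :
    (Chain.cons τ₁ h hs tl).height = max (energy K' L' τ₁) tl.height := rfl

lemma Chain.height_append {K' L' : ℕ} [NeZero K'] [NeZero L'] :
    ∀ {τ₁ τ₂ τ₃ : Cfg K' L'} (p : Chain K' L' τ₁ τ₂) (q : Chain K' L' τ₂ τ₃),
    (p.append q).height ≤ max p.height q.height := by
  intro τ₁ τ₂ τ₃ p q
  induction p with
  | nil τ h => exact le_max_right _ _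
  | cons τ h hs tl ih =>
    show max (energy K' L' τ) ((tl.append q).height) ≤ max (max (energy K' L' τ) tl.height) q.height
    rw [max_assoc]
    exact max_le_max le_rfl (ih q)

def HCPath.nil' (τ : Cfg K L) (h : HardCore K L τ) : HCPath K L τ τ :=
  ⟨0, fun _ => τ, rfl, rfl, fun _ => h, fun i => i.elim0⟩

lemma pathHeight_nil' (τ : Cfg K L) (h : HardCore K L τ) :
    pathHeight K L (HCPath.nil' K L τ h) = energy K L τ := by
  rw [pathHeight]
  exact Finset.sup'_const Finset.univ_nonempty (energy K L τ)

def HCPath.cons' {τ₁ τ₂ τ₃ : Cfg K L} (h1 : HardCore K L τ₁)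
    (hs : ((univ : Finset (Vert K L)).filter fun v => τ₁ v ≠ τ₂ v).card ≤ 1)
    (p : HCPath K L τ₂ τ₃) : HCPath K L τ₁ τ₃ where
  n := p.n + 1
  ω := Fin.cons τ₁ p.ω
  first := by simp
  last := by rw [← Fin.succ_last, Fin.cons_succ]; exact p.last
  hc := fun i => by
    refine Fin.cases ?_ ?_ i
    · simpa using h1
    · intro j; simpa [Fin.cons_succ] using p.hc j
  step := fun i => by
    refine Fin.cases ?_ ?_ i
    · simpa [Fin.castSucc_zero, Fin.cons_succ, p.first] using hs
    · intro j
      simp only [← Fin.succ_castSucc, Fin.cons_succ]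
      exact p.step j

lemma pathHeight_cons' {τ₁ τ₂ τ₃ : Cfg K L} (h1 : HardCore K L τ₁)
    (hs : ((univ : Finset (Vert K L)).filter fun v => τ₁ v ≠ τ₂ v).card ≤ 1)
    (p : HCPath K L τ₂ τ₃) :
    pathHeight K L (HCPath.cons' K L h1 hs p) ≤ max (energy K L τ₁) (pathHeight K L p) := by
  rw [pathHeight]
  apply Finset.sup'_le
  intro i _
  refine Fin.cases ?_ ?_ i
  · simp only [HCPath.cons', Fin.cons_zero]
    exact le_max_left _ _
  · intro j
    have h2 : energy K L (p.ω j) ≤ pathHeight K L p := by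
      rw [pathHeight]
      exact Finset.le_sup' (fun i => energy K L (p.ω i)) (mem_univ j)
    simp only [HCPath.cons', Fin.cons_succ]
    exact le_trans h2 (le_max_right _ _)

lemma Chain.toPath : ∀ {τ τ' : Cfg K L} (c : Chain K L τ τ'),
    ∃ p : HCPath K L τ τ', pathHeight K L p ≤ c.height := by
  intro τ τ' c
  induction c with
  | nil τ h => exact ⟨HCPath.nil' K L τ h, le_of_eq (pathHeight_nil' K L τ h)⟩
  | cons τ₁ h hs tl ih =>
    obtain ⟨p, hp⟩ := ih
    exact ⟨HCPath.cons' K L h hs p,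
      le_trans (pathHeight_cons' K L h hs p) (max_le_max le_rfl hp)⟩

lemma cleared_above {τ : Cfg K L} (hτ : HardCore K L τ) (ρ : ZMod (2*K))
    (hfill : ∀ u : Vert K L, u.1.2.val % 3 = 1 → u.1.1 = ρ → τ u = true) :
    ∀ v : Vert K L, v.1.2.val % 3 ≠ 1 → v.1.1 = ρ + 1 → τ v = false := by
  intro v hv hrow
  obtain ⟨u, hub, hurow, hadj⟩ := nonb_has_b_nbr K L hv
  have hu : τ u = true := hfill u hub (by rw [hurow, hrow]; ring)
  by_contra hvt
  have hvt' : τ v = true := by simpa using hvt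
  exact hτ v u hadj ⟨hvt', hu⟩

lemma rowfill (hK : 2 ≤ K) (ρ : ZMod (2*K)) :
    ∀ (N : ℕ) (τ : Cfg K L), HardCore K L τ →
    (((univ : Finset (Vert K L)).filter
        fun u => u.1.1 = ρ ∧ u.1.2.val % 3 = 1 ∧ τ u = false).card ≤ N) →
    (∀ u : Vert K L, u.1.1 = ρ → u.1.2.val % 3 = 1 → τ u = false →
       ∀ w : Vert K L, Adj K L u w → τ w = true → w.1.1 = u.1.1 + 1) →
    ∃ (τ' : Cfg K L) (c : Chain K L τ τ'),
      HardCore K L τ' ∧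
      c.height ≤ energy K L τ + 1 ∧ energy K L τ' ≤ energy K L τ ∧
      (∀ u : Vert K L, u.1.1 = ρ → u.1.2.val % 3 = 1 → τ' u = true) ∧
      (∀ v : Vert K L, v.1.2.val % 3 ≠ 1 → τ' v = true → τ v = true) ∧
      (∀ u : Vert K L, u.1.2.val % 3 = 1 → τ u = true → τ' u = true) := by
  intro N
  induction N with
  | zero =>
    intro τ hτ hcard _
    refine ⟨τ, .nil τ hτ, hτ, by rw [Chain.height_nil]; omega, le_rfl, ?_,
      fun v _ h => h, fun u _ h => h⟩
    intro u h1 h2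
    by_contra hu
    have hu' : τ u = false := by simpa using hu
    have hmem : u ∈ (univ : Finset (Vert K L)).filter
        (fun u => u.1.1 = ρ ∧ u.1.2.val % 3 = 1 ∧ τ u = false) :=
      mem_filter.mpr ⟨mem_univ u, h1, h2, hu'⟩
    have := Finset.card_pos.mpr ⟨u, hmem⟩
    omega
  | succ N ih =>
    intro τ hτ hcard hQ
    by_cases hex : ∃ u : Vert K L, u.1.1 = ρ ∧ u.1.2.val % 3 = 1 ∧ τ u = false
    · obtain ⟨u, hu1, hu2, hu3⟩ := hex
      have humem : u ∈ (univ : Finset (Vert K L)).filter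
          (fun u => u.1.1 = ρ ∧ u.1.2.val % 3 = 1 ∧ τ u = false) :=
        mem_filter.mpr ⟨mem_univ u, hu1, hu2, hu3⟩
      by_cases hw : ∃ w : Vert K L, Adj K L u w ∧ τ w = true
      · -- one removal, then fill u
        obtain ⟨w, hadj, hwt⟩ := hw
        have hwrow : w.1.1 = u.1.1 + 1 := hQ u hu1 hu2 hu3 w hadj hwt
        have hwnb : w.1.2.val % 3 ≠ 1 := adj_b_nonb K L hadj hu2
        have huw : u ≠ w := by
          intro h; rw [h, hwt] at hu3; simp at hu3
        set τ₁ := Function.update τ w false with hτ₁def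
        set τ₂ := Function.update τ₁ u true with hτ₂def
        have hτ₁ : HardCore K L τ₁ := hardCore_update_false K L hτ w
        have hτ₁w : τ₁ w = false := by rw [hτ₁def, Function.update_self]
        have hτ₁u : τ₁ u = false := by rw [hτ₁def, Function.update_of_ne huw]; exact hu3
        have hnb : ∀ w' : Vert K L, Adj K L u w' → τ₁ w' = false := by
          intro w' hadj'
          by_cases hww' : w' = w
          · rw [hww']; exact hτ₁w
          · rw [hτ₁def, Function.update_of_ne hww']
            by_contra hcon
            have hw't : τ w' = true := by simpa using hcon
            have hw'row : w'.1.1 = u.1.1 + 1 := hQ u hu1 hu2 hu3 w' hadj' hw't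
            have hadjww' : Adj K L w w' :=
              upper_nbrs_adj K L hK hadj hadj' hwrow hw'row (Ne.symm hww')
            exact hτ w w' hadjww' ⟨hwt, hw't⟩
        have hτ₂ : HardCore K L τ₂ := hardCore_update_true K L hτ₁ u hnb
        have hτ₂u : τ₂ u = true := by rw [hτ₂def, Function.update_self]
        have hτ₂w : τ₂ w = false := by
          rw [hτ₂def, Function.update_of_ne (Ne.symm huw)]; exact hτ₁w
        have hτ₂eq : ∀ v : Vert K L, v ≠ u → v ≠ w → τ₂ v = τ v := by
          intro v hvu hvw
          rw [hτ₂def, Function.update_of_ne hvu, hτ₁def, Function.update_of_ne hvw]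
        -- measure
        have hcard₂ : (((univ : Finset (Vert K L)).filter
            fun x => x.1.1 = ρ ∧ x.1.2.val % 3 = 1 ∧ τ₂ x = false).card ≤ N) := by
          have hsub : ((univ : Finset (Vert K L)).filter
              fun x => x.1.1 = ρ ∧ x.1.2.val % 3 = 1 ∧ τ₂ x = false) ⊆
              (((univ : Finset (Vert K L)).filter
              fun x => x.1.1 = ρ ∧ x.1.2.val % 3 = 1 ∧ τ x = false)).erase u := by
            intro v hv
            simp only [mem_filter, mem_univ, true_and] at hv
            obtain ⟨hv1, hv2, hv3⟩ := hv
            have hvu : v ≠ u := by intro h; rw [h, hτ₂u] at hv3; simp at hv3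
            have hvw : v ≠ w := by intro h; rw [h] at hv2; exact hwnb hv2
            rw [Finset.mem_erase]
            refine ⟨hvu, mem_filter.mpr ⟨mem_univ v, hv1, hv2, ?_⟩⟩
            rw [← hτ₂eq v hvu hvw]; exact hv3
          have h1 := Finset.card_erase_add_one humem
          have h2 := Finset.card_le_card hsub
          omega
        -- Q condition for τ₂
        have hQ₂ : ∀ u' : Vert K L, u'.1.1 = ρ → u'.1.2.val % 3 = 1 → τ₂ u' = false →
            ∀ w'' : Vert K L, Adj K L u' w'' → τ₂ w'' = true → w''.1.1 = u'.1.1 + 1 := by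
          intro u' h1 h2 h3 w'' hadj'' hw''
          have hu'u : u' ≠ u := by intro h; rw [h, hτ₂u] at h3; simp at h3
          have hu'w : u' ≠ w := by intro h; rw [h] at h2; exact hwnb h2
          have hw''w : w'' ≠ w := by intro h; rw [h, hτ₂w] at hw''; simp at hw''
          have hw''u : w'' ≠ u := by
            intro h; rw [h] at hadj''
            exact adj_b_nonb K L hadj'' h2 hu2
          rw [hτ₂eq u' hu'u hu'w] at h3
          rw [hτ₂eq w'' hw''u hw''w] at hw''
          exact hQ u' h1 h2 h3 w'' hadj'' hw''
        obtain ⟨τ', c', hHC', hh', he', hfill', hnonb', hbpres'⟩ := ih τ₂ hτ₂ hcard₂ hQ₂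
        have hE1 : energy K L τ₁ = energy K L τ + 1 := by rw [hτ₁def]; exact energy_update_false K L τ w hwt
        have hE2 : energy K L τ₂ = energy K L τ₁ - 1 := by rw [hτ₂def]; exact energy_update_true K L τ₁ u hτ₁u
        refine ⟨τ', .cons τ hτ (update_diff_le K L τ w false)
            (.cons τ₁ hτ₁ (update_diff_le K L τ₁ u true) c'), hHC', ?_, ?_, hfill', ?_, ?_⟩
        · rw [Chain.height_cons, Chain.height_cons]
          rw [show Function.update τ w false = τ₁ from rfl]
          have : c'.height ≤ energy K L τ + 1 := by omega
          exact max_le (by omega) (max_le (by omega) this)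
        · omega
        · intro v hv hvt
          have h2 := hnonb' v hv hvt
          have hvu : v ≠ u := by intro h; rw [h] at hv; exact hv hu2
          by_cases hvw : v = w
          · rw [hvw, hτ₂w] at h2; simp at h2
          · rwa [hτ₂eq v hvu hvw] at h2
        · intro u'' hb ht
          apply hbpres' u'' hb
          by_cases h : u'' = u
          · rw [h]; exact hτ₂u
          · have hu''w : u'' ≠ w := by intro hh; rw [hh] at hb; exact hwnb hb
            rw [hτ₂eq u'' h hu''w]; exact ht
      · -- pure addition at u
        push_neg at hw
        have hnb : ∀ w : Vert K L, Adj K L u w → τ w = false := by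
          intro w h; have := hw w h; simpa using this
        set τ₁ := Function.update τ u true with hτ₁def
        have hτ₁ : HardCore K L τ₁ := hardCore_update_true K L hτ u hnb
        have hτ₁u : τ₁ u = true := by rw [hτ₁def, Function.update_self]
        have hτ₁eq : ∀ v : Vert K L, v ≠ u → τ₁ v = τ v := by
          intro v hvu; rw [hτ₁def, Function.update_of_ne hvu]
        have hcard₁ : (((univ : Finset (Vert K L)).filter
            fun x => x.1.1 = ρ ∧ x.1.2.val % 3 = 1 ∧ τ₁ x = false).card ≤ N) := by
          have hsub : ((univ : Finset (Vert K L)).filter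
              fun x => x.1.1 = ρ ∧ x.1.2.val % 3 = 1 ∧ τ₁ x = false) ⊆
              (((univ : Finset (Vert K L)).filter
              fun x => x.1.1 = ρ ∧ x.1.2.val % 3 = 1 ∧ τ x = false)).erase u := by
            intro v hv
            simp only [mem_filter, mem_univ, true_and] at hv
            obtain ⟨hv1, hv2, hv3⟩ := hv
            have hvu : v ≠ u := by intro h; rw [h, hτ₁u] at hv3; simp at hv3
            rw [Finset.mem_erase]
            refine ⟨hvu, mem_filter.mpr ⟨mem_univ v, hv1, hv2, ?_⟩⟩
            rw [← hτ₁eq v hvu]; exact hv3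
          have h1 := Finset.card_erase_add_one humem
          have h2 := Finset.card_le_card hsub
          omega
        have hQ₁ : ∀ u' : Vert K L, u'.1.1 = ρ → u'.1.2.val % 3 = 1 → τ₁ u' = false →
            ∀ w'' : Vert K L, Adj K L u' w'' → τ₁ w'' = true → w''.1.1 = u'.1.1 + 1 := by
          intro u' h1 h2 h3 w'' hadj'' hw''
          have hu'u : u' ≠ u := by intro h; rw [h, hτ₁u] at h3; simp at h3
          have hw''u : w'' ≠ u := by
            intro h; rw [h] at hadj''
            exact adj_b_nonb K L hadj'' h2 hu2
          rw [hτ₁eq u' hu'u] at h3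
          rw [hτ₁eq w'' hw''u] at hw''
          exact hQ u' h1 h2 h3 w'' hadj'' hw''
        obtain ⟨τ', c', hHC', hh', he', hfill', hnonb', hbpres'⟩ := ih τ₁ hτ₁ hcard₁ hQ₁
        have hE1 : energy K L τ₁ = energy K L τ - 1 := by rw [hτ₁def]; exact energy_update_true K L τ u hu3
        refine ⟨τ', .cons τ hτ (update_diff_le K L τ u true) c', hHC', ?_, ?_, hfill', ?_, ?_⟩
        · rw [Chain.height_cons]
          exact max_le (by omega) (by omega)
        · omega
        · intro v hv hvt
          have h2 := hnonb' v hv hvt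
          have hvu : v ≠ u := by intro h; rw [h] at hv; exact hv hu2
          rwa [hτ₁eq v hvu] at h2
        · intro u'' hb ht
          apply hbpres' u'' hb
          by_cases h : u'' = u
          · rw [h]; exact hτ₁u
          · rw [hτ₁eq u'' h]; exact ht
    · -- nothing to do
      push_neg at hex
      refine ⟨τ, .nil τ hτ, hτ, by rw [Chain.height_nil]; omega, le_rfl, ?_,
        fun v _ h => h, fun u _ h => h⟩
      intro u h1 h2
      by_contra hu
      have hu' : τ u = false := by simpa using hu
      exact absurd hu' (hex u h1 h2)

lemma outer12 (hK : 2 ≤ K) (σ : Cfg K L) (hσ : HardCore K L σ)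
    (h0 : ∀ v : Vert K L, inHStripe K L 0 v →
      (v.1.2.val % 3 = 0 ∨ v.1.2.val % 3 = 2) → σ v = false) :
    ∀ t : ℕ, 1 ≤ t → t ≤ 2*K →
    ∃ (τ : Cfg K L) (c : Chain K L σ τ),
      HardCore K L τ ∧ c.height ≤ energy K L σ + 1 ∧ energy K L τ ≤ energy K L σ ∧
      (∀ u : Vert K L, u.1.2.val % 3 = 1 →
        ∀ r : ℕ, 1 ≤ r → r ≤ t → u.1.1 = (r : ZMod (2*K)) → τ u = true) ∧
      (∀ v : Vert K L, v.1.2.val % 3 ≠ 1 →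
        ∀ r : ℕ, r ≤ t + 1 → v.1.1 = (r : ZMod (2*K)) → τ v = false) := by
  intro t
  induction t with
  | zero => intro h; omega
  | succ t iht =>
    intro _ hle
    by_cases ht : t = 0
    · -- base stage: fill row 1
      subst ht
      have hQ : ∀ u : Vert K L, u.1.1 = ((1:ℕ) : ZMod (2*K)) → u.1.2.val % 3 = 1 →
          σ u = false → ∀ w : Vert K L, Adj K L u w → σ w = true → w.1.1 = u.1.1 + 1 := by
        intro u h1 h2 _ w hadj hwt
        have hwnb : w.1.2.val % 3 ≠ 1 := adj_b_nonb K L hadj h2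
        have hwnb' : w.1.2.val % 3 = 0 ∨ w.1.2.val % 3 = 2 := by
          have := w.1.2.val_lt; omega
        obtain ⟨hr, -⟩ | ⟨hr | hr, -⟩ := adj_cases K L hadj
        · exfalso
          have hstr : inHStripe K L 0 w := Or.inr (by rw [hr, h1])
          rw [h0 w hstr hwnb'] at hwt; simp at hwt
        · exact hr
        · exfalso
          have hw0 : w.1.1 = ((2*0 : ℕ) : ZMod (2*K)) := by
            have h1' : u.1.1 = 0 + 1 := by rw [h1]; norm_num
            have := hr.symm.trans h1'
            simpa using add_right_cancel this
          have hstr : inHStripe K L 0 w := Or.inl hw0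
          rw [h0 w hstr hwnb'] at hwt; simp at hwt
      obtain ⟨τ', c, hHC', hh, he, hfill, hnonb, -⟩ :=
        rowfill K L hK (((1:ℕ) : ZMod (2*K)))
          (((univ : Finset (Vert K L)).filter
            fun u => u.1.1 = ((1:ℕ) : ZMod (2*K)) ∧ u.1.2.val % 3 = 1 ∧ σ u = false).card)
          σ hσ le_rfl hQ
      refine ⟨τ', c, hHC', hh, he, ?_, ?_⟩
      · intro u hb r hr1 hr2 hrow
        have : r = 1 := by omega
        subst this
        exact hfill u hrow hb
      · intro v hv r hr hrow
        have hvnb' : v.1.2.val % 3 = 0 ∨ v.1.2.val % 3 = 2 := by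
          have := v.1.2.val_lt; omega
        interval_cases r
        · -- r = 0
          have hσv : σ v = false := h0 v (Or.inl (by rw [hrow])) hvnb'
          by_contra hcon
          have : τ' v = true := by simpa using hcon
          rw [hnonb v hv this] at hσv; simp at hσv
        · -- r = 1
          have hσv : σ v = false := h0 v (Or.inr (by rw [hrow])) hvnb'
          by_contra hcon
          have : τ' v = true := by simpa using hcon
          rw [hnonb v hv this] at hσv; simp at hσv
        · -- r = 2
          have hrow2 : v.1.1 = ((1:ℕ) : ZMod (2*K)) + 1 := by rw [hrow]; push_cast; ring
          exact cleared_above K L hHC' ((1:ℕ) : ZMod (2*K))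
            (fun u hb hr' => hfill u hr' hb) v hv hrow2
    · -- inductive stage: fill row t+1
      have ht1 : 1 ≤ t := by omega
      obtain ⟨τ, c, hHC, hh, he, hfill, hclear⟩ := iht ht1 (by omega)
      have hQ : ∀ u : Vert K L, u.1.1 = ((t+1:ℕ) : ZMod (2*K)) → u.1.2.val % 3 = 1 →
          τ u = false → ∀ w : Vert K L, Adj K L u w → τ w = true → w.1.1 = u.1.1 + 1 := by
        intro u h1 h2 _ w hadj hwt
        have hwnb : w.1.2.val % 3 ≠ 1 := adj_b_nonb K L hadj h2
        obtain ⟨hr, -⟩ | ⟨hr | hr, -⟩ := adj_cases K L hadj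
        · exfalso
          rw [hclear w hwnb (t+1) (by omega) (hr.trans h1)] at hwt; simp at hwt
        · exact hr
        · exfalso
          have hwrow : w.1.1 = ((t:ℕ) : ZMod (2*K)) := by
            have h1' : u.1.1 = ((t:ℕ) : ZMod (2*K)) + 1 := by rw [h1]; push_cast; ring
            exact add_right_cancel (hr.symm.trans h1')
          rw [hclear w hwnb t (by omega) hwrow] at hwt; simp at hwt
      obtain ⟨τ', c₂, hHC', hh₂, he₂, hfill₂, hnonb₂, hbpres₂⟩ :=
        rowfill K L hK (((t+1:ℕ) : ZMod (2*K)))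
          (((univ : Finset (Vert K L)).filter
            fun u => u.1.1 = ((t+1:ℕ) : ZMod (2*K)) ∧ u.1.2.val % 3 = 1 ∧ τ u = false).card)
          τ hHC le_rfl hQ
      refine ⟨τ', c.append c₂, hHC', ?_, by omega, ?_, ?_⟩
      · calc (c.append c₂).height ≤ max c.height c₂.height := Chain.height_append c c₂
          _ ≤ energy K L σ + 1 := max_le hh (by omega)
      · intro u hb r hr1 hr2 hrow
        by_cases hrt : r ≤ t
        · exact hbpres₂ u hb (hfill u hb r hr1 hrt hrow)
        · have : r = t + 1 := by omega
          subst this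
          exact hfill₂ u hrow hb
      · intro v hv r hr hrow
        by_cases hrt : r ≤ t + 1
        · have hτv : τ v = false := hclear v hv r hrt hrow
          by_contra hcon
          have : τ' v = true := by simpa using hcon
          rw [hnonb₂ v hv this] at hτv; simp at hτv
        · have : r = t + 2 := by omega
          subst this
          have hrow2 : v.1.1 = ((t+1:ℕ) : ZMod (2*K)) + 1 := by rw [hrow]; push_cast; ring
          exact cleared_above K L hHC' (((t+1:ℕ)) : ZMod (2*K))
            (fun u hb hr' => hfill₂ u hr' hb) v hv hrow2

/-- Energy reduction by rows: if a hard-core configuration `σ` has no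
gray and no white particles in the first horizontal stripe `S_0` (i.e. `σ` vanishes on
`S_0 ∩ (Λ_a ∪ Λ_c)`), then there is a path from `σ` to `b` of height at most `H(σ) + 1`. -/
theorem energy_reduction_by_rows (hK : 2 ≤ K) (hL : 1 ≤ L)
    (σ : Cfg K L) (hσ : HardCore K L σ)
    (h0 : ∀ v : Vert K L, inHStripe K L 0 v →
      (v.1.2.val % 3 = 0 ∨ v.1.2.val % 3 = 2) → σ v = false) :
    ∃ p : HCPath K L σ (confB K L), pathHeight K L p ≤ energy K L σ + 1 := by
  obtain ⟨τ, c, hHC, hh, he, hfill, hclear⟩ :=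
    outer12 K L hK σ hσ h0 (2*K) (by omega) le_rfl
  have hτ : τ = confB K L := by
    funext v
    by_cases hb : v.1.2.val % 3 = 1
    · have hv : τ v = true := by
        by_cases h : v.1.1.val = 0
        · refine hfill v hb (2*K) (by omega) le_rfl ?_
          have h1 : v.1.1 = 0 := (ZMod.val_eq_zero v.1.1).mp h
          rw [h1, ZMod.natCast_self]
        · refine hfill v hb v.1.1.val (by omega) (by have := ZMod.val_lt v.1.1; omega) ?_
          exact (ZMod.natCast_rightInverse v.1.1).symm
      rw [hv]
      simp [confB, hb]
    · have hv : τ v = false := by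
        refine hclear v hb v.1.1.val (by have := ZMod.val_lt v.1.1; omega) ?_
        exact (ZMod.natCast_rightInverse v.1.1).symm
      rw [hv]
      simp [confB, hb]
  subst hτ
  obtain ⟨p, hp⟩ := Chain.toPath K L c
  exact ⟨p, le_trans hp hh⟩
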